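/- arXiv:1109.2832 — 7 statements merged into one kernel-verified Lean document; each statement's English description precedes it below -/
import Mathlib

section
/- Let Λ = (Λ^⊛, Λ^*) be a superpartition with N parts, meaning Λ^* ⊆ Λ^⊛ are partitions such that the skew diagram Λ^⊛/Λ^* is simultaneously a horizontal strip and a vertical strip (i.e. Λ^⊛_i − Λ^*_i ∈ {0,1} for all i, and equality Λ^⊛_i = Λ^⊛_{i+1} with Λ^⊛_i − Λ^*_i = 1 forces Λ^⊛_{i+1} = Λ^*_{i+1}). If Λ is (k,r,N)-admissible, i.e. Λ^⊛_i − Λ^*_{i+k} ≥ r for all 1 ≤ i ≤ N−k, then the partition Λ^* is (k+1,r,N)-admissible, i.e. Λ^*_i − Λ^*_{i+k+1} ≥ r for all 1 ≤ i ≤ N−k−1. -/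
/-- A partition with `N` parts (1-indexed, zero entries allowed):
weakly decreasing on `1,…,N`. -/
def IsPartitionN (N : ℕ) (f : ℕ → ℕ) : Prop :=
  ∀ i, 1 ≤ i → i < N → f (i + 1) ≤ f i

/-- A superpartition with `N` parts: a pair of partitions `(Λ^⊛, Λ^*) = (Lc, Ls)`
with `Λ^⊛_i − Λ^*_i ∈ {0,1}` for all `i`, such that rows with difference `1`
carry pairwise distinct `Λ^*`-values. -/
def IsSuperPartitionN (N : ℕ) (Lc Ls : ℕ → ℕ) : Prop :=
  IsPartitionN N Lc ∧ IsPartitionN N Ls ∧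
  (∀ i, 1 ≤ i → i ≤ N → Ls i ≤ Lc i ∧ Lc i ≤ Ls i + 1) ∧
  (∀ i j, 1 ≤ i → i < j → j ≤ N →
    Lc i = Ls i + 1 → Lc j = Ls j + 1 → Ls i ≠ Ls j)

/-- `(k,r,N)`-admissibility: `Λ^⊛_i − Λ^*_{i+k} ≥ r` for all `1 ≤ i ≤ N−k`. -/
def IsAdmissibleN (k r N : ℕ) (Lc Ls : ℕ → ℕ) : Prop :=
  ∀ i, 1 ≤ i → i + k ≤ N → Ls (i + k) + r ≤ Lc i

/-- If `Λ` is a `(k,r,N)`-admissible superpartition, then the partition `Λ^*`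
is `(k+1,r,N)`-admissible: `Λ^*_i − Λ^*_{i+k+1} ≥ r` for all `1 ≤ i ≤ N−k−1`. -/
theorem stmt_4 (k r N : ℕ) (hk : 1 ≤ k) (hr : 2 ≤ r)
    (Lc Ls : ℕ → ℕ)
    (hsp : IsSuperPartitionN N Lc Ls)
    (hadm : IsAdmissibleN k r N Lc Ls) :
    ∀ i, 1 ≤ i → i + (k + 1) ≤ N → Ls (i + (k + 1)) + r ≤ Ls i := by
  obtain ⟨hLc, hLs, hdiff, hdist⟩ := hsp
  intro i hi hiN
  have h1 : i + k ≤ N := by omega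
  have hd := hdiff i hi (by omega)
  by_cases hcase : Lc i = Ls i
  · -- bosonic row
    have hmono : Ls (i + (k+1)) ≤ Ls (i + k) := by
      have := hLs (i + k) (by omega) (by omega)
      simpa [Nat.add_assoc] using this
    have := hadm i hi h1
    omega
  · -- Lc i = Ls i + 1
    have hci : Lc i = Ls i + 1 := by omega
    have h2 := hadm (i+1) (by omega) (by omega)
    have hkey : Lc (i+1) ≤ Ls i := by
      by_contra hlt
      push_neg at hlt
      have hle : Lc (i+1) ≤ Lc i := hLc i hi (by omega)
      have hd1 := hdiff (i+1) (by omega) (by omega)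
      have hci1 : Lc (i+1) = Ls i + 1 := by omega
      by_cases hf : Lc (i+1) = Ls (i+1) + 1
      · have hne := hdist i (i+1) hi (by omega) (by omega) hci hf
        have : Ls (i+1) ≤ Ls i := hLs i hi (by omega)
        omega
      · have : Ls (i+1) ≤ Ls i := hLs i hi (by omega)
        omega
    rw [show i + 1 + k = i + (k + 1) by omega] at h2
    omega
end

section
/- Let k ≥ 1, r ≥ 2 with gcd(k+1, r−1) = 1 and let Λ be a (k,r,N)-admissible superpartition. Then for all 1 ≤ i < j ≤ N, it is not the case that j − i = (k+1)t and Λ^*_i − Λ^*_j = (r−1)t simultaneously hold for some positive integer t. -/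
/-- Let `k ≥ 1`, `r ≥ 2` with `gcd(k+1, r−1) = 1` and `Λ` a `(k,r,N)`-admissible
superpartition.  Then for all `1 ≤ i < j ≤ N`, there is no positive integer `t` with
`j − i = (k+1)t` and `Λ^*_i − Λ^*_j = (r−1)t`. -/
theorem stmt_9 (k r N : ℕ) (hk : 1 ≤ k) (hr : 2 ≤ r)
    (hcop : Nat.gcd (k + 1) (r - 1) = 1)
    (Lc Ls : ℕ → ℕ)
    (hsp : IsSuperPartitionN N Lc Ls)
    (hadm : IsAdmissibleN k r N Lc Ls) :
    ∀ i j, 1 ≤ i → i < j → j ≤ N →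
      ¬ ∃ t : ℕ, 0 < t ∧ j = i + (k + 1) * t ∧ Ls i = Ls j + (r - 1) * t := by

  obtain ⟨hLc, hLs, hdiff, hdist⟩ := hsp
  rintro i j hi hij hjN ⟨t, ht, hjt, hval⟩
  obtain ⟨r', rfl⟩ : ∃ r', r = r' + 1 := ⟨r - 1, by omega⟩
  have hr' : 1 ≤ r' := by omega
  have hr1 : r' + 1 - 1 = r' := by omega
  rw [hr1] at hval
  -- chain lemma
  have chain : ∀ t a, 1 ≤ a → a + (k+1)*t ≤ N →
      Ls (a + (k+1)*t) + r' * t ≤ Ls a := by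
    intro t
    induction t with
    | zero => intro a _ _; simp
    | succ n ih =>
      intro a ha haN
      have hkk : (k+1)*(n+1) = (k+1)*n + (k+1) := by ring
      rw [hkk] at haN ⊢
      have hrr : r' * (n+1) = r' * n + r' := by ring
      rw [hrr]
      obtain ⟨C, hC⟩ : ∃ C, (k+1)*n = C := ⟨_, rfl⟩
      obtain ⟨D, hD⟩ : ∃ D, r'*n = D := ⟨_, rfl⟩
      rw [hC] at haN ⊢
      rw [hD]
      have ih' := ih (a + k + 1) (by omega) (by rw [hC]; omega)
      rw [hC, hD] at ih'
      have hidx : a + (C + (k + 1)) = a + k + 1 + C := by omega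
      rw [hidx]
      have h1 := hadm a ha (by omega)
      have h2 := (hdiff a ha (by omega)).2
      have h3 := hLs (a+k) (by omega) (by omega)
      omega
  obtain ⟨t', rfl⟩ : ∃ t', t = t' + 1 := ⟨t - 1, by omega⟩
  have hkk : (k+1)*(t'+1) = (k+1)*t' + (k+1) := by ring
  have hrr : r' * (t'+1) = r' * t' + r' := by ring
  obtain ⟨M, hM⟩ : ∃ M, (k+1)*t' = M := ⟨_, rfl⟩
  obtain ⟨R, hR⟩ : ∃ R, r'*t' = R := ⟨_, rfl⟩
  rw [hkk, hM] at hjt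
  rw [hrr, hR] at hval
  -- hjt : j = i + (M + (k+1)), hval : Ls i = Ls j + (R + r')
  have h4 := chain t' (i + k + 1) (by omega) (by rw [hM]; omega)
  rw [hM, hR] at h4
  rw [show i + k + 1 + M = j by omega] at h4
  have h1 := hadm i hi (by omega)
  have h2 := (hdiff i hi (by omega)).2
  have h3 := hLs (i+k) (by omega) (by omega)
  have m1 := hLs i hi (by omega)
  have h5 := hadm (i+1) (by omega) (by omega)
  rw [show i + 1 + k = i + k + 1 by omega] at h5
  have h6 := (hdiff (i+1) (by omega) (by omega)).2
  have heq1 : Lc i = Ls i + 1 := by omega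
  have heq2 : Lc (i+1) = Ls (i+1) + 1 := by omega
  have heq3 : Ls i = Ls (i+1) := by omega
  exact hdist i (i+1) hi (by omega) (by omega) heq1 heq2 heq3
end

section
/- Let k ≥ 1, r ≥ 2 with gcd(k+1, r−1) = 1 and let Ω be a (k,r,N)-admissible superpartition. Then for every row i and every column j < Ω^⊛_i, it is not the case that Ω^⊛_i − j = t(r−1) and (Ω^⊛)'_j − i = t(k+1) for some positive integer t, where (Ω^⊛)' denotes the conjugate of the partition Ω^⊛. -/
/-- A partition is weakly decreasing on the whole range `[1, N]`. -/
lemma partition_anti {N : ℕ} {f : ℕ → ℕ} (hf : IsPartitionN N f) :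
    ∀ a b, 1 ≤ a → a ≤ b → b ≤ N → f b ≤ f a := by
  intro a b ha hab hbN
  induction b, hab using Nat.le_induction with
  | base => exact le_rfl
  | succ b hab ih =>
    have h1 : f (b + 1) ≤ f b := hf b (le_trans ha hab) (by omega)
    exact le_trans h1 (ih (by omega))

/-- Let `k ≥ 1`, `r ≥ 2` with `gcd(k+1, r−1) = 1` and `Ω` a `(k,r,N)`-admissible
superpartition.  Then for every row `i` (`1 ≤ i ≤ N`) and every column `j` with
`1 ≤ j < Ω^⊛_i`, there is no positive integer `t` with `Ω^⊛_i − j = t(r−1)` and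
`(Ω^⊛)'_j − i = t(k+1)`, where `(Ω^⊛)'_j = #{i : 1 ≤ i ≤ N, Ω^⊛_i ≥ j}`. -/
theorem stmt_10 (k r N : ℕ) (hk : 1 ≤ k) (hr : 2 ≤ r)
    (hcop : Nat.gcd (k + 1) (r - 1) = 1)
    (Oc Os : ℕ → ℕ)
    (hsp : IsSuperPartitionN N Oc Os)
    (hadm : IsAdmissibleN k r N Oc Os)
    (conj : ℕ → ℕ)
    (hconj : ∀ j, conj j = Set.ncard {i : ℕ | 1 ≤ i ∧ i ≤ N ∧ j ≤ Oc i}) :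
    ∀ i j, 1 ≤ i → i ≤ N → 1 ≤ j → j < Oc i →
      ¬ ∃ t : ℕ, 0 < t ∧ Oc i = j + t * (r - 1) ∧ conj j = i + t * (k + 1) := by
  intro i j hi1 hiN hj1 hjOc
  rintro ⟨t, ht, hOci, hconjEq⟩
  obtain ⟨hOcP, hOsP, hdiff, hdist⟩ := hsp
  have hOcA := partition_anti hOcP
  have hOsA := partition_anti hOsP
  set r' := r - 1 with hr'
  have hrr : r = r' + 1 := by omega
  -- the column set is a finite interval
  set T : Finset ℕ := (Finset.Icc 1 N).filter (fun x => j ≤ Oc x) with hT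
  have hset : {x : ℕ | 1 ≤ x ∧ x ≤ N ∧ j ≤ Oc x} = ↑T := by
    ext x
    simp only [hT, Finset.coe_filter, Finset.mem_Icc, Set.mem_setOf_eq]
    tauto
  have hcard : conj j = T.card := by
    rw [hconj j, hset, Set.ncard_coe_finset]
  have hiT : i ∈ T := by
    simp only [hT, Finset.mem_filter, Finset.mem_Icc]
    exact ⟨⟨hi1, hiN⟩, le_of_lt hjOc⟩
  have hTne : T.Nonempty := ⟨i, hiT⟩
  set s := T.max' hTne with hs
  have hsT : s ∈ T := T.max'_mem hTne
  have hsmem : (1 ≤ s ∧ s ≤ N) ∧ j ≤ Oc s := by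
    simpa only [hT, Finset.mem_filter, Finset.mem_Icc] using hsT
  have hTeq : T = Finset.Icc 1 s := by
    ext x
    simp only [Finset.mem_Icc]
    constructor
    · intro hx
      have hx' : (1 ≤ x ∧ x ≤ N) ∧ j ≤ Oc x := by
        simpa only [hT, Finset.mem_filter, Finset.mem_Icc] using hx
      exact ⟨hx'.1.1, T.le_max' x hx⟩
    · rintro ⟨hx1, hxs⟩
      simp only [hT, Finset.mem_filter, Finset.mem_Icc]
      exact ⟨⟨hx1, le_trans hxs hsmem.1.2⟩,
        le_trans hsmem.2 (hOcA x s hx1 hxs hsmem.1.2)⟩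
  have hcard2 : T.card = s := by
    rw [hTeq, Nat.card_Icc]
    omega
  have hsval : s = i + t * k + t := by
    have h1 : t * (k + 1) = t * k + t := by ring
    omega
  have hsN : s ≤ N := hsmem.1.2
  have hkt : k ≤ t * k := Nat.le_mul_of_pos_left k ht
  -- iterated admissibility chain
  have hchain : ∀ n, 1 ≤ n → n ≤ t → Os (i + n * k) + (n * r' + 1) ≤ Oc i := by
    intro n hn1
    induction n, hn1 using Nat.le_induction with
    | base =>
      intro _
      have h1 : Os (i + k) + r ≤ Oc i := hadm i hi1 (by omega)
      simp only [one_mul]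
      omega
    | succ n hn ih =>
      intro hnt
      have ihn := ih (by omega)
      have hmul : (n + 1) * k ≤ t * k := Nat.mul_le_mul_right k (by omega)
      have hmk : (n + 1) * k = n * k + k := by ring
      have hmr : (n + 1) * r' = n * r' + r' := by ring
      have h1 : Os (i + n * k + k) + r ≤ Oc (i + n * k) :=
        hadm (i + n * k) (by omega) (by omega)
      have h2 : Oc (i + n * k) ≤ Os (i + n * k) + 1 :=
        (hdiff (i + n * k) (by omega) (by omega)).2
      have h3 : i + (n + 1) * k = i + n * k + k := by omega
      rw [h3]
      omega
  have hOsa : Os (i + t * k) + (t * r' + 1) ≤ Oc i := hchain t ht le_rfl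
  -- rows a := i + t*k and b := a + 1 are both circled with the same Os value
  set a := i + t * k with ha
  have ha1 : 1 ≤ a := by omega
  have hbs : a + 1 ≤ s := by omega
  have haN : a ≤ N := by omega
  have hbN : a + 1 ≤ N := by omega
  have hOsb : Os (a + 1) ≤ Os a := hOsA a (a + 1) ha1 (by omega) hbN
  have hOcb1 : Oc (a + 1) ≤ Os (a + 1) + 1 := (hdiff (a + 1) (by omega) hbN).2
  have hOcb2 : Oc s ≤ Oc (a + 1) := hOcA (a + 1) s (by omega) hbs hsN
  have hOca1 : Oc a ≤ Os a + 1 := (hdiff a ha1 haN).2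
  have hOca2 : Oc s ≤ Oc a := hOcA a s ha1 (by omega) hsN
  have hjs : j ≤ Oc s := hsmem.2
  have htr : Oc i = j + t * r' := hOci
  -- all inequalities collapse
  have hca : Oc a = Os a + 1 := by omega
  have hcb : Oc (a + 1) = Os (a + 1) + 1 := by omega
  have heq : Os a = Os (a + 1) := by omega
  exact hdist a (a + 1) ha1 (by omega) hbN hca hcb heq
end

section
/- Let w, σ be permutations of {1,…,N} and let Λ = (Λ^⊛, Λ^*) be a superpartition such that Λ^* is (k+1,r,N)-admissible (Λ^*_i − Λ^*_{i+k+1} ≥ r) and Λ^⊛_i − Λ^*_i ∈ {0,1}. Suppose Ω is a superpartition with Ω^*_i = Λ^*_{w(i)} + (w(i)−i)(r−1)/(k+1) and Ω^⊛_i = Λ^⊛_{σ(i)} + (σ(i)−i)(r−1)/(k+1) for all i, with w(i) ≡ i and σ(i) ≡ i mod (k+1). If for some i one has σ(i) > w(i), then σ(i) = w(i) + k + 1 and Ω^⊛_i = Ω^*_i. -/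

private lemma adm_iter (k r N : ℕ) (Ls : ℕ → ℕ)
    (hLs_adm : ∀ i, 1 ≤ i → i + (k + 1) ≤ N → Ls (i + (k + 1)) + r ≤ Ls i) :
    ∀ m j, 1 ≤ j → j + m * (k + 1) ≤ N → Ls (j + m * (k + 1)) + m * r ≤ Ls j := by
  intro m
  induction m with
  | zero => simp
  | succ m ih =>
    intro j hj hle
    have hle' : j + (k + 1) + m * (k + 1) ≤ N := by
      have : j + (m + 1) * (k + 1) = j + (k + 1) + m * (k + 1) := by ring
      omega
    have h1 := ih (j + (k + 1)) (by omega) hle'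
    have h2 := hLs_adm j hj (by omega)
    have heq : j + (m + 1) * (k + 1) = j + (k + 1) + m * (k + 1) := by ring
    rw [heq]
    have : (m + 1) * r = m * r + r := by ring
    omega

/-- Claim I (parts I.1 and I.2) of the regularity proof.  Let `w, σ` be permutations of
`{1,…,N}`, `Λ = (Lc, Ls)` with `Λ^*` `(k+1,r,N)`-admissible and `Λ^⊛ − Λ^*` entrywise
in `{0,1}`, and let `Ω = (Oc, Os)` be a superpartition with
`Ω^*_i = Λ^*_{w(i)} + (w(i)−i)(r−1)/(k+1)` and
`Ω^⊛_i = Λ^⊛_{σ(i)} + (σ(i)−i)(r−1)/(k+1)` (stated multiplied through by `k+1` over `ℤ`),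
where `w(i) ≡ i` and `σ(i) ≡ i (mod k+1)`.  If `σ(i) > w(i)` for some `i`, then
`σ(i) = w(i) + k + 1` and `Ω^⊛_i = Ω^*_i`. -/
theorem stmt_13 (k r N : ℕ) (hk : 1 ≤ k) (hr : 2 ≤ r)
    (Lc Ls Oc Os : ℕ → ℕ) (w sg : ℕ → ℕ)
    (hw : Set.BijOn w (Set.Icc 1 N) (Set.Icc 1 N))
    (hsg : Set.BijOn sg (Set.Icc 1 N) (Set.Icc 1 N))
    (hLc_dec : IsPartitionN N Lc) (hLs_dec : IsPartitionN N Ls)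
    (hstrip : ∀ i, 1 ≤ i → i ≤ N → Ls i ≤ Lc i ∧ Lc i ≤ Ls i + 1)
    (hLs_adm : ∀ i, 1 ≤ i → i + (k + 1) ≤ N → Ls (i + (k + 1)) + r ≤ Ls i)
    (hwcong : ∀ i, 1 ≤ i → i ≤ N → w i % (k + 1) = i % (k + 1))
    (hsgcong : ∀ i, 1 ≤ i → i ≤ N → sg i % (k + 1) = i % (k + 1))
    (hOsdef : ∀ i, 1 ≤ i → i ≤ N →
      ((k : ℤ) + 1) * Os i = ((k : ℤ) + 1) * Ls (w i) + ((w i : ℤ) - i) * ((r : ℤ) - 1))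
    (hOcdef : ∀ i, 1 ≤ i → i ≤ N →
      ((k : ℤ) + 1) * Oc i = ((k : ℤ) + 1) * Lc (sg i) + ((sg i : ℤ) - i) * ((r : ℤ) - 1))
    (hOsp : IsSuperPartitionN N Oc Os) :
    ∀ i, 1 ≤ i → i ≤ N → w i < sg i → sg i = w i + (k + 1) ∧ Oc i = Os i := by
  intro i hi hiN hlt
  have hwmem := hw.mapsTo (Set.mem_Icc.mpr ⟨hi, hiN⟩)
  have hsgmem := hsg.mapsTo (Set.mem_Icc.mpr ⟨hi, hiN⟩)
  rw [Set.mem_Icc] at hwmem hsgmem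
  obtain ⟨hw1, hwN⟩ := hwmem
  obtain ⟨hs1, hsN⟩ := hsgmem
  have hmod : Nat.ModEq (k + 1) (w i) (sg i) :=
    (hwcong i hi hiN).trans (hsgcong i hi hiN).symm
  obtain ⟨m, hm⟩ := (Nat.modEq_iff_dvd' hlt.le).mp hmod
  rw [Nat.mul_comm] at hm
  have hm1 : 1 ≤ m := by
    rcases Nat.eq_zero_or_pos m with h0 | h
    · subst h0; simp at hm; omega
    · exact h
  have hsgw : sg i = w i + m * (k + 1) := by omega
  have hadm := adm_iter k r N Ls hLs_adm m (w i) hw1 (by omega)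
  have hstrip_sg := hstrip (sg i) hs1 hsN
  have hOord := hOsp.2.2.1 i hi hiN
  have h1 := hOsdef i hi hiN
  have h2 := hOcdef i hi hiN
  have hsgwZ : (sg i : ℤ) = (w i : ℤ) + ((k : ℤ) + 1) * m := by
    push_cast [hsgw]; ring
  have hkey : (Oc i : ℤ) - Os i = (Lc (sg i) : ℤ) - Ls (w i) + (m : ℤ) * ((r : ℤ) - 1) := by
    have hk0 : ((k : ℤ) + 1) ≠ 0 := by positivity
    apply mul_left_cancel₀ hk0
    linear_combination h2 - h1 + ((r : ℤ) - 1) * hsgwZ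
  have hadmZ : (Ls (sg i) : ℤ) + (m : ℤ) * r ≤ (Ls (w i) : ℤ) := by
    rw [hsgw]; exact_mod_cast hadm
  have hstripZ : (Lc (sg i) : ℤ) ≤ (Ls (sg i) : ℤ) + 1 := by exact_mod_cast hstrip_sg.2
  have hO1 : (Os i : ℤ) ≤ (Oc i : ℤ) := by exact_mod_cast hOord.1
  have hmul : (m : ℤ) * ((r : ℤ) - 1) = (m : ℤ) * r - m := by ring
  have hmZ : (1 : ℤ) ≤ m := by exact_mod_cast hm1
  have h3 : (Oc i : ℤ) - Os i ≤ 1 - m := by linarith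
  have hm1' : m = 1 := by
    have : (m : ℤ) ≤ 1 := by linarith
    exact_mod_cast le_antisymm (by exact_mod_cast this) hm1
  subst hm1'
  refine ⟨by omega, ?_⟩
  have : (Oc i : ℤ) ≤ (Os i : ℤ) := by linarith
  have := hOord.1
  omega
end

section
/- Under the same setup as Claim I (superpartition Ω defined from Λ via permutations w, σ with w(i) ≡ σ(i) ≡ i mod (k+1), Λ^* being (k+1,r,N)-admissible and Λ^⊛ − Λ^* entrywise in {0,1}, and additionally Λ^⊛ being (k+1,r,N)-admissible): if σ(i) < w(i) for some i, then w(i) = σ(i) + k + 1, Ω^⊛_i − Ω^*_i = 1, Λ^⊛_{σ(i)} − Λ^*_{w(i)} = r, and Λ^⊛_{σ(i)} = Λ^*_{σ(i)}. -/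
lemma iterAdm (k r N : ℕ) (f : ℕ → ℕ)
    (hadm : ∀ i, 1 ≤ i → i + (k + 1) ≤ N → f (i + (k + 1)) + r ≤ f i) :
    ∀ m a, 1 ≤ a → a + (k + 1) * m ≤ N → f (a + (k + 1) * m) + m * r ≤ f a := by
  intro m
  induction m with
  | zero => simp
  | succ n ih =>
    intro a ha hle
    have e : a + (k + 1) * (n + 1) = (a + (k + 1)) + (k + 1) * n := by ring
    rw [e] at hle ⊢
    have h1 := ih (a + (k + 1)) (by omega) hle
    have h2 := hadm a ha (le_trans (Nat.le_add_right _ _) hle)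
    have e2 : (n + 1) * r = n * r + r := by ring
    rw [e2]
    linarith

/-- Claim II (parts II.1–II.4) of the regularity proof.  Same setup as Claim I
(superpartition `Ω` defined from `Λ` via permutations `w, σ` of `{1,…,N}` with
`w(i) ≡ σ(i) ≡ i (mod k+1)`, `Λ^*` being `(k+1,r,N)`-admissible and `Λ^⊛ − Λ^*`
entrywise in `{0,1}`), with additionally `Λ^⊛` `(k+1,r,N)`-admissible:
if `σ(i) < w(i)` for some `i`, then `w(i) = σ(i) + k + 1`, `Ω^⊛_i − Ω^*_i = 1`,
`Λ^⊛_{σ(i)} − Λ^*_{w(i)} = r`, and `Λ^⊛_{σ(i)} = Λ^*_{σ(i)}`. -/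
theorem stmt_14 (k r N : ℕ) (hk : 1 ≤ k) (hr : 2 ≤ r)
    (Lc Ls Oc Os : ℕ → ℕ) (w sg : ℕ → ℕ)
    (hw : Set.BijOn w (Set.Icc 1 N) (Set.Icc 1 N))
    (hsg : Set.BijOn sg (Set.Icc 1 N) (Set.Icc 1 N))
    (hLc_dec : IsPartitionN N Lc) (hLs_dec : IsPartitionN N Ls)
    (hstrip : ∀ i, 1 ≤ i → i ≤ N → Ls i ≤ Lc i ∧ Lc i ≤ Ls i + 1)
    (hLs_adm : ∀ i, 1 ≤ i → i + (k + 1) ≤ N → Ls (i + (k + 1)) + r ≤ Ls i)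
    (hLc_adm : ∀ i, 1 ≤ i → i + (k + 1) ≤ N → Lc (i + (k + 1)) + r ≤ Lc i)
    (hwcong : ∀ i, 1 ≤ i → i ≤ N → w i % (k + 1) = i % (k + 1))
    (hsgcong : ∀ i, 1 ≤ i → i ≤ N → sg i % (k + 1) = i % (k + 1))
    (hOsdef : ∀ i, 1 ≤ i → i ≤ N →
      ((k : ℤ) + 1) * Os i = ((k : ℤ) + 1) * Ls (w i) + ((w i : ℤ) - i) * ((r : ℤ) - 1))
    (hOcdef : ∀ i, 1 ≤ i → i ≤ N →
      ((k : ℤ) + 1) * Oc i = ((k : ℤ) + 1) * Lc (sg i) + ((sg i : ℤ) - i) * ((r : ℤ) - 1))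
    (hOsp : IsSuperPartitionN N Oc Os) :
    ∀ i, 1 ≤ i → i ≤ N → sg i < w i →
      w i = sg i + (k + 1) ∧ Oc i = Os i + 1 ∧
      Lc (sg i) = Ls (w i) + r ∧ Lc (sg i) = Ls (sg i) := by
  intro i hi1 hiN hlt
  obtain ⟨hw1, hwN⟩ := hw.mapsTo (Set.mem_Icc.mpr ⟨hi1, hiN⟩)
  obtain ⟨hsg1, hsgN⟩ := hsg.mapsTo (Set.mem_Icc.mpr ⟨hi1, hiN⟩)
  -- w i ≡ sg i mod (k+1), so w i = sg i + (k+1)*m with m ≥ 1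
  have hcong : w i % (k + 1) = sg i % (k + 1) := by
    rw [hwcong i hi1 hiN, hsgcong i hi1 hiN]
  have hdvd : (k + 1) ∣ (w i - sg i) :=
    (Nat.modEq_iff_dvd' hlt.le).mp hcong.symm
  obtain ⟨m, hm⟩ := hdvd
  have hwm : w i = sg i + (k + 1) * m := by rw [← hm]; omega
  have hm1 : 1 ≤ m := by
    rcases Nat.eq_zero_or_pos m with h | h
    · subst h; omega
    · exact h
  -- iterated admissibility for Lc
  have h1c : Lc (w i) + m * r ≤ Lc (sg i) := by
    have := iterAdm k r N Lc hLc_adm m (sg i) hsg1 (by rw [← hwm]; exact hwN)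
    rwa [← hwm] at this
  have hstripO := hOsp.2.2.1 i hi1 hiN
  have hstripW := hstrip (w i) hw1 hwN
  -- key integer identity
  have hw' : (w i : ℤ) = (sg i : ℤ) + ((k : ℤ) + 1) * m := by
    exact_mod_cast congrArg (Nat.cast : ℕ → ℤ) hwm
  have e1 := hOsdef i hi1 hiN
  have e2 := hOcdef i hi1 hiN
  have hZ : ((k : ℤ) + 1) * ((Oc i : ℤ) - Os i) =
      ((k : ℤ) + 1) * ((Lc (sg i) : ℤ) - Ls (w i) - (m : ℤ) * ((r : ℤ) - 1)) := by
    linear_combination e2 - e1 - ((r : ℤ) - 1) * hw'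
  have key : (Oc i : ℤ) - Os i =
      (Lc (sg i) : ℤ) - Ls (w i) - (m : ℤ) * ((r : ℤ) - 1) :=
    mul_left_cancel₀ (by positivity) hZ
  -- deduce m = 1
  have hc : ((Lc (w i) : ℤ)) + (m : ℤ) * r ≤ Lc (sg i) := by exact_mod_cast h1c
  have hid : (m : ℤ) * ((r : ℤ) - 1) = (m : ℤ) * r - m := by ring
  have hmle : (m : ℤ) ≤ 1 := by
    have hOs : (Oc i : ℤ) ≤ (Os i : ℤ) + 1 := by exact_mod_cast hstripO.2
    have hW : ((Ls (w i) : ℤ)) ≤ Lc (w i) := by exact_mod_cast hstripW.1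
    linarith
  have hmeq : m = 1 := by exact_mod_cast le_antisymm (by exact_mod_cast hmle) hm1
  subst hmeq
  have key1 : (Oc i : ℤ) - Os i = (Lc (sg i) : ℤ) - Ls (w i) - ((r : ℤ) - 1) := by
    push_cast at key; linarith
  have hc1 : Lc (w i) + r ≤ Lc (sg i) := by simpa using h1c
  have hOc : Oc i = Os i + 1 := by omega
  have hLcr : Lc (sg i) = Ls (w i) + r := by omega
  have hwm1 : w i = sg i + (k + 1) := by omega
  refine ⟨hwm1, hOc, hLcr, ?_⟩
  have hLs : Ls (sg i + (k + 1)) + r ≤ Ls (sg i) :=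
    hLs_adm (sg i) hsg1 (by rw [← hwm1]; exact hwN)
  rw [← hwm1] at hLs
  have := (hstrip (sg i) hsg1 hsgN).1
  omega
end

section
/- The map sending a superpartition Λ = (Λ^⊛, Λ^*) to the overpartition obtained from Λ^⊛ by overlining the entries Λ^⊛_i for which Λ^⊛_i − Λ^*_i = 1 is a bijection from superpartitions onto overpartitions (partitions in which the last occurrence of any part value may be overlined, with at most one overlined 0 allowed corresponding to a circled zero part). -/
/-- A partition: a weakly decreasing sequence of nonnegative integers (0-indexed)
with finitely many nonzero parts. -/
def IsPartitionSeq (f : ℕ → ℕ) : Prop :=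
  (∀ i, f (i + 1) ≤ f i) ∧ (∃ M, ∀ i, M ≤ i → f i = 0)

/-- A superpartition: a pair of partitions `(Λ^⊛, Λ^*)` with `Λ^⊛_i − Λ^*_i ∈ {0,1}`
for all `i`, such that the rows with `Λ^⊛_i − Λ^*_i = 1` carry pairwise distinct
`Λ^*`-values (equivalently, `Λ^⊛/Λ^*` is both a horizontal and a vertical strip). -/
def IsSuperPartitionSeq (Lc Ls : ℕ → ℕ) : Prop :=
  IsPartitionSeq Lc ∧ IsPartitionSeq Ls ∧
  (∀ i, Ls i ≤ Lc i ∧ Lc i ≤ Ls i + 1) ∧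
  (∀ i j, i < j → Lc i = Ls i + 1 → Lc j = Ls j + 1 → Ls i ≠ Ls j)

/-- An overpartition: a partition `μ` together with a set of overlined positions,
where only the final occurrence of a part value may be overlined
(i.e. an overlined position `i` satisfies `μ_{i+1} < μ_i`). -/
def IsOverPartition (mu : ℕ → ℕ) (o : ℕ → Prop) : Prop :=
  IsPartitionSeq mu ∧ (∀ i, o i → mu (i + 1) < mu i)

lemma partition_anti_s16 {f : ℕ → ℕ} (h : ∀ i, f (i + 1) ≤ f i) :
    ∀ i j, i ≤ j → f j ≤ f i := by
  intro i j hij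
  induction j, hij using Nat.le_induction with
  | base => exact le_rfl
  | succ n hn ih => exact le_trans (h n) ih

/-- The map sending a superpartition `Λ = (Λ^⊛, Λ^*)` to the overpartition obtained
from `Λ^⊛` by overlining the entries with `Λ^⊛_i − Λ^*_i = 1` is a bijection from
superpartitions onto overpartitions. -/
theorem stmt_16 :
    Set.BijOn
      (fun L : (ℕ → ℕ) × (ℕ → ℕ) => ((L.1, fun i => L.1 i = L.2 i + 1) : (ℕ → ℕ) × (ℕ → Prop)))
      {L : (ℕ → ℕ) × (ℕ → ℕ) | IsSuperPartitionSeq L.1 L.2}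
      {O : (ℕ → ℕ) × (ℕ → Prop) | IsOverPartition O.1 O.2} := by
  classical
  refine ⟨?_, ?_, ?_⟩
  · -- MapsTo
    rintro ⟨Lc, Ls⟩ hmem
    obtain ⟨⟨hLc, hLcM⟩, ⟨hLs, hLsM⟩, hrange, hdist⟩ : IsSuperPartitionSeq Lc Ls := hmem
    show IsOverPartition Lc (fun i => Lc i = Ls i + 1)
    refine ⟨⟨hLc, hLcM⟩, ?_⟩
    intro i hi
    by_contra h
    have h1 : Lc (i + 1) = Lc i := le_antisymm (hLc i) (not_lt.mp h)
    have h2 : Ls (i + 1) ≤ Ls i := hLs i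
    rcases hrange (i + 1) with ⟨ha, hb⟩
    have hs : Ls (i + 1) = Ls i := by omega
    have hc : Lc (i + 1) = Ls (i + 1) + 1 := by omega
    exact hdist i (i + 1) (Nat.lt_succ_self i) hi hc hs.symm
  · -- InjOn
    rintro ⟨Lc, Ls⟩ hmem ⟨Lc', Ls'⟩ hmem' heq
    obtain ⟨_, _, hr, _⟩ : IsSuperPartitionSeq Lc Ls := hmem
    obtain ⟨_, _, hr', _⟩ : IsSuperPartitionSeq Lc' Ls' := hmem'
    simp only [Prod.mk.injEq] at heq
    obtain ⟨h1, h2⟩ := heq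
    subst h1
    have h3 : Ls = Ls' := by
      funext i
      have hiff : (Lc i = Ls i + 1) ↔ (Lc i = Ls' i + 1) := by
        rw [show (Lc i = Ls i + 1) = (Lc i = Ls' i + 1) from congrFun h2 i]
      rcases hr i with ⟨ha, hb⟩
      rcases hr' i with ⟨ha', hb'⟩
      by_cases hc : Lc i = Ls i + 1
      · have := hiff.mp hc; omega
      · have : ¬ (Lc i = Ls' i + 1) := fun h => hc (hiff.mpr h)
        omega
    rw [h3]
  · -- SurjOn
    rintro ⟨mu, o⟩ hmem
    obtain ⟨⟨hmu, M, hM⟩, ho⟩ : IsOverPartition mu o := hmem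
    have mono := partition_anti_s16 hmu
    set Ls : ℕ → ℕ := fun i => if o i then mu i - 1 else mu i with hLs
    refine ⟨(mu, Ls), ?_, ?_⟩
    · show IsSuperPartitionSeq mu Ls
      refine ⟨⟨hmu, M, hM⟩, ⟨?_, M, ?_⟩, ?_, ?_⟩
      · intro i
        simp only [hLs]
        have h1 := hmu i
        by_cases h : o i
        · have := ho i h
          by_cases h' : o (i + 1) <;> simp only [h, h', if_true, if_false] <;> omega
        · by_cases h' : o (i + 1) <;> simp only [h, h', if_true, if_false] <;> omega
      · intro i hi
        simp only [hLs]
        have := hM i hi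
        split <;> omega
      · intro i
        simp only [hLs]
        by_cases h : o i
        · have := ho i h; simp only [h, if_true]; omega
        · simp only [h, if_false]; omega
      · intro i j hij hi hj
        simp only [hLs] at hi hj ⊢
        have hoi : o i := by
          by_contra h; simp only [h, if_false] at hi; omega
        have hoj : o j := by
          by_contra h; simp only [h, if_false] at hj; omega
        have h1 := ho i hoi
        have h2 := ho j hoj
        have h3 : mu j ≤ mu (i + 1) := mono _ _ hij
        simp only [hoi, hoj, if_true]
        omega
    · show ((mu, fun i => mu i = Ls i + 1) : (ℕ → ℕ) × (ℕ → Prop)) = (mu, o)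
      have key : (fun i => mu i = Ls i + 1) = o := by
        funext i
        rw [eq_iff_iff]
        simp only [hLs]
        by_cases h : o i
        · have := ho i h
          simp only [h, if_true, iff_true]
          omega
        · simp only [h, if_false, iff_false]
          omega
      rw [key]
end

section
/- Under the bijection between superpartitions Λ and overpartitions Ω (overlining in Λ^⊛ the parts with Λ^⊛_i − Λ^*_i = 1), a superpartition Λ with N parts is (k,2,N)-admissible if and only if the corresponding overpartition Ω satisfies, for all 1 ≤ i ≤ N−k: Ω_i − Ω_{i+k} ≥ 1 if Ω_{i+k} is overlined, and Ω_i − Ω_{i+k} ≥ 2 otherwise. -/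
/-- Under the bijection sending a superpartition `Λ` to the overpartition
`Ω_i = Λ^⊛_i` with `Ω_i` overlined iff `Λ^⊛_i − Λ^*_i = 1`, the superpartition `Λ`
is `(k,2,N)`-admissible if and only if for all `1 ≤ i ≤ N−k`:
`Ω_i − Ω_{i+k} ≥ 1` if `Ω_{i+k}` is overlined, and `Ω_i − Ω_{i+k} ≥ 2` otherwise. -/
theorem stmt_17 (k N : ℕ) (hk : 1 ≤ k)
    (Lc Ls : ℕ → ℕ)
    (hsp : IsSuperPartitionN N Lc Ls) :
    IsAdmissibleN k 2 N Lc Ls ↔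
      ∀ i, 1 ≤ i → i + k ≤ N →
        (Lc (i + k) = Ls (i + k) + 1 → Lc (i + k) + 1 ≤ Lc i) ∧
        (Lc (i + k) = Ls (i + k) → Lc (i + k) + 2 ≤ Lc i) := by
  obtain ⟨-, -, hd, -⟩ := hsp
  constructor
  · intro h i h1 h2
    have := h i h1 h2
    omega
  · intro h i h1 h2
    have := h i h1 h2
    have hb := hd (i + k) (by omega) h2
    omega
end
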